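/- Let X, Y, Z be independent exponentially distributed random variables with rates μ₁, μ₂, μ₃ > 0, let d₁, d₂ > 0, d = d₁ + d₂, and write q₁(u) = Q(√(2d₁ρu)). Define the CSA joint-success probability P^C(ρ) = E[ (1 − q₁(X))(1 − q₁(Z)) + (1 − q₁(X)) q₁(Z) (1 − Q(√(2d₁ρZ + 2d₂ρY))) + q₁(X)(1 − q₁(Z)) (1 − Q(√(2d₁ρX + 2d₂ρY))) ] and the non-cooperative joint-success probability P^{NC}(ρ) = E[1 − Q(√(2dρX))] · E[1 − Q(√(2dρZ))]. Then there exists ρ₀ > 0 such that for all ρ ≥ ρ₀, P^C(ρ) ≥ P^{NC}(ρ). -/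

import Mathlib

open MeasureTheory Real

/-- The Gaussian tail function `Q(x) = ∫_x^∞ (1/√(2π)) e^{−t²/2} dt`. -/
noncomputable def gaussQ (x : ℝ) : ℝ :=
  ∫ t in Set.Ioi x, (Real.sqrt (2 * Real.pi))⁻¹ * Real.exp (-t ^ 2 / 2)

section helpers
open MeasureTheory Real Set
set_option maxHeartbeats 1000000
lemma gauss_integrable :
    Integrable (fun t : ℝ => (Real.sqrt (2 * Real.pi))⁻¹ * Real.exp (-t ^ 2 / 2)) := by
  have h : Integrable (fun t : ℝ => Real.exp (-(1/2 : ℝ) * t ^ 2)) :=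
    integrable_exp_neg_mul_sq (by norm_num)
  have h2 : (fun t : ℝ => Real.exp (-t ^ 2 / 2)) = fun t : ℝ => Real.exp (-(1/2 : ℝ) * t ^ 2) := by
    funext t; ring_nf
  exact (h2 ▸ h).const_mul _

lemma gauss_total :
    ∫ t : ℝ, (Real.sqrt (2 * Real.pi))⁻¹ * Real.exp (-t ^ 2 / 2) = 1 := by
  rw [MeasureTheory.integral_const_mul]
  have h2 : (fun t : ℝ => Real.exp (-t ^ 2 / 2)) = fun t : ℝ => Real.exp (-(1/2 : ℝ) * t ^ 2) := by
    funext t; ring_nf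
  rw [h2, integral_gaussian]
  rw [show (π / (1/2 : ℝ)) = 2 * π by ring]
  rw [inv_mul_cancel₀]
  positivity

lemma gaussQ_nonneg (x : ℝ) : 0 ≤ gaussQ x := by
  apply setIntegral_nonneg measurableSet_Ioi
  intro t _; positivity

lemma gaussQ_anti : Antitone gaussQ := by
  intro x y hxy
  exact setIntegral_mono_set gauss_integrable.integrableOn
    (Filter.Eventually.of_forall fun t => by positivity)
    (HasSubset.Subset.eventuallyLE (Ioi_subset_Ioi hxy))

lemma measurable_gaussQ : Measurable gaussQ := gaussQ_anti.measurable

lemma gaussQ_le_one (x : ℝ) : gaussQ x ≤ 1 := by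
  rw [← gauss_total]
  exact setIntegral_le_integral gauss_integrable
    (Filter.Eventually.of_forall fun t => by positivity)

lemma gaussQ_le_exp {x : ℝ} (hx : 0 ≤ x) : gaussQ x ≤ Real.exp (-x ^ 2 / 2) := by
  have key : gaussQ x ≤ ∫ t in Set.Ioi x,
      Real.exp (-x ^ 2 / 2) * ((Real.sqrt (2 * Real.pi))⁻¹ * Real.exp (-(t - x) ^ 2 / 2)) := by
    apply setIntegral_mono_on gauss_integrable.integrableOn
      (((gauss_integrable.comp_sub_right x).const_mul _).integrableOn)
      measurableSet_Ioi
    intro t ht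
    simp only [mem_Ioi] at ht
    rw [mul_comm (Real.exp _), mul_assoc]
    apply mul_le_mul_of_nonneg_left _ (by positivity)
    rw [← Real.exp_add]
    apply Real.exp_le_exp.2
    nlinarith
  refine key.trans ?_
  have h2 : ∫ t in Set.Ioi x,
      Real.exp (-x ^ 2 / 2) * ((Real.sqrt (2 * Real.pi))⁻¹ * Real.exp (-(t - x) ^ 2 / 2))
      ≤ ∫ t : ℝ, Real.exp (-x ^ 2 / 2) * ((Real.sqrt (2 * Real.pi))⁻¹ * Real.exp (-(t - x) ^ 2 / 2)) := by
    apply setIntegral_le_integral ((gauss_integrable.comp_sub_right x).const_mul _)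
      (Filter.Eventually.of_forall fun t => by positivity)
  refine h2.trans ?_
  rw [MeasureTheory.integral_const_mul]
  rw [integral_sub_right_eq_self (μ := volume)
    (fun t => (Real.sqrt (2 * Real.pi))⁻¹ * Real.exp (-t ^ 2 / 2)) x]
  rw [gauss_total, mul_one]

lemma gaussQ_one_pos : 0 < gaussQ 1 := by
  have c1 : (0:ℝ) < (Real.sqrt (2 * Real.pi))⁻¹ * Real.exp (-(2:ℝ)) := by positivity
  have key : (Real.sqrt (2 * Real.pi))⁻¹ * Real.exp (-(2:ℝ)) ≤ gaussQ 1 := by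
    have h1 : ∫ t in Set.Ioc (1:ℝ) 2, (Real.sqrt (2 * Real.pi))⁻¹ * Real.exp (-(2:ℝ))
        ≤ ∫ t in Set.Ioc (1:ℝ) 2, (Real.sqrt (2 * Real.pi))⁻¹ * Real.exp (-t ^ 2 / 2) := by
      apply setIntegral_mono_on (integrableOn_const measure_Ioc_lt_top.ne)
        gauss_integrable.integrableOn measurableSet_Ioc
      intro t ht
      simp only [mem_Ioc] at ht
      apply mul_le_mul_of_nonneg_left _ (by positivity)
      apply Real.exp_le_exp.2
      nlinarith [ht.1, ht.2]
    have h2 : ∫ t in Set.Ioc (1:ℝ) 2, (Real.sqrt (2 * Real.pi))⁻¹ * Real.exp (-t ^ 2 / 2)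
        ≤ gaussQ 1 := by
      apply setIntegral_mono_set gauss_integrable.integrableOn
        (Filter.Eventually.of_forall fun t => by positivity)
        (HasSubset.Subset.eventuallyLE Ioc_subset_Ioi_self)
    have h3 : ∫ t in Set.Ioc (1:ℝ) 2, ((Real.sqrt (2 * Real.pi))⁻¹ * Real.exp (-(2:ℝ))) =
        (Real.sqrt (2 * Real.pi))⁻¹ * Real.exp (-(2:ℝ)) := by
      rw [setIntegral_const]
      rw [Real.volume_real_Ioc]
      norm_num
    linarith
  linarith

lemma int_exp {b : ℝ} (hb : 0 < b) : ∫ x in Set.Ioi (0:ℝ), Real.exp (-(b * x)) = b⁻¹ := by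
  have := integral_comp_mul_left_Ioi (fun u => Real.exp (-u)) 0 hb
  simp only [mul_zero, integral_exp_neg_Ioi, neg_zero, Real.exp_zero, smul_eq_mul, mul_one] at this
  exact this

lemma exp_dens_eq (k μ : ℝ) (x : ℝ) :
    Real.exp (-(k * x)) * (μ * Real.exp (-(μ * x))) = μ * Real.exp (-((k + μ) * x)) := by
  rw [show Real.exp (-(k * x)) * (μ * Real.exp (-(μ * x)))
      = μ * (Real.exp (-(k * x)) * Real.exp (-(μ * x))) from by ring, ← Real.exp_add]
  ring_nf

lemma integrable_exp_dens {k μ : ℝ} (hk : 0 ≤ k) (hμ : 0 < μ) :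
    IntegrableOn (fun x : ℝ => Real.exp (-(k * x)) * (μ * Real.exp (-(μ * x)))) (Set.Ioi 0) := by
  have h : IntegrableOn (fun x : ℝ => μ * Real.exp (-(k + μ) * x)) (Set.Ioi (0:ℝ)) :=
    (exp_neg_integrableOn_Ioi 0 (by linarith)).const_mul μ
  apply h.congr_fun _ measurableSet_Ioi
  intro x _
  dsimp only
  rw [exp_dens_eq k μ x, neg_mul]

lemma int_exp_dens {k μ : ℝ} (hk : 0 ≤ k) (hμ : 0 < μ) :
    ∫ x in Set.Ioi (0:ℝ), Real.exp (-(k * x)) * (μ * Real.exp (-(μ * x))) = μ / (μ + k) := by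
  rw [setIntegral_congr_fun measurableSet_Ioi (fun x _ => exp_dens_eq k μ x)]
  rw [MeasureTheory.integral_const_mul, int_exp (by linarith)]
  rw [div_eq_mul_inv]
  ring_nf

lemma int_dens {μ : ℝ} (hμ : 0 < μ) :
    ∫ x in Set.Ioi (0:ℝ), μ * Real.exp (-(μ * x)) = 1 := by
  have := int_exp_dens (le_refl 0) hμ
  simp only [zero_mul, neg_zero, Real.exp_zero, one_mul, add_zero, div_self hμ.ne'] at this
  exact this

lemma integrable_dens {μ : ℝ} (hμ : 0 < μ) :
    IntegrableOn (fun x : ℝ => μ * Real.exp (-(μ * x))) (Set.Ioi 0) := by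
  have := integrable_exp_dens (le_refl 0) hμ
  simpa using this

lemma integrable_lin {c₁ c₂ c₃ k₁ k₂ μ : ℝ} (hk₁ : 0 ≤ k₁) (hk₂ : 0 ≤ k₂) (hμ : 0 < μ) :
    IntegrableOn (fun x : ℝ =>
      (1 - (c₁ * Real.exp (-(k₁ * x)) + c₂ * Real.exp (-(k₂ * x)) + c₃)) *
        (μ * Real.exp (-(μ * x)))) (Set.Ioi 0) := by
  have h : IntegrableOn (fun x : ℝ =>
      (1 - c₃) * (μ * Real.exp (-(μ * x)))
        - c₁ * (Real.exp (-(k₁ * x)) * (μ * Real.exp (-(μ * x))))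
        - c₂ * (Real.exp (-(k₂ * x)) * (μ * Real.exp (-(μ * x))))) (Set.Ioi 0) :=
    (((integrable_dens hμ).const_mul _).sub
      ((integrable_exp_dens hk₁ hμ).const_mul _)).sub ((integrable_exp_dens hk₂ hμ).const_mul _)
  apply h.congr_fun _ measurableSet_Ioi
  intro x _; ring

lemma int_lin {c₁ c₂ c₃ k₁ k₂ μ : ℝ} (hk₁ : 0 ≤ k₁) (hk₂ : 0 ≤ k₂) (hμ : 0 < μ) :
    ∫ x in Set.Ioi (0:ℝ),
      (1 - (c₁ * Real.exp (-(k₁ * x)) + c₂ * Real.exp (-(k₂ * x)) + c₃)) *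
        (μ * Real.exp (-(μ * x)))
    = 1 - c₁ * (μ / (μ + k₁)) - c₂ * (μ / (μ + k₂)) - c₃ := by
  have h : ∀ x : ℝ, (1 - (c₁ * Real.exp (-(k₁ * x)) + c₂ * Real.exp (-(k₂ * x)) + c₃)) *
        (μ * Real.exp (-(μ * x)))
      = (1 - c₃) * (μ * Real.exp (-(μ * x)))
        - c₁ * (Real.exp (-(k₁ * x)) * (μ * Real.exp (-(μ * x))))
        - c₂ * (Real.exp (-(k₂ * x)) * (μ * Real.exp (-(μ * x)))) := by
    intro x; ring
  rw [setIntegral_congr_fun measurableSet_Ioi (fun x _ => h x)]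
  have hA : Integrable (fun x : ℝ => (1 - c₃) * (μ * Real.exp (-(μ * x)))
      - c₁ * (Real.exp (-(k₁ * x)) * (μ * Real.exp (-(μ * x)))))
      (volume.restrict (Set.Ioi 0)) :=
    ((integrable_dens hμ).const_mul _).sub ((integrable_exp_dens hk₁ hμ).const_mul _)
  have hB : Integrable (fun x : ℝ => c₂ * (Real.exp (-(k₂ * x)) * (μ * Real.exp (-(μ * x)))))
      (volume.restrict (Set.Ioi 0)) := (integrable_exp_dens hk₂ hμ).const_mul _
  rw [integral_sub hA hB,
    integral_sub (((integrable_dens hμ).const_mul _) :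
        Integrable (fun x : ℝ => (1 - c₃) * (μ * Real.exp (-(μ * x)))) _)
      (((integrable_exp_dens hk₁ hμ).const_mul _) :
        Integrable (fun x : ℝ => c₁ * (Real.exp (-(k₁ * x)) * (μ * Real.exp (-(μ * x))))) _),
    MeasureTheory.integral_const_mul (1 - c₃) (fun x : ℝ => μ * Real.exp (-(μ * x))),
    MeasureTheory.integral_const_mul c₁, MeasureTheory.integral_const_mul c₂,
    int_dens hμ, int_exp_dens hk₁ hμ, int_exp_dens hk₂ hμ]
  ring

lemma int_dens_Ioc {μ δ : ℝ} (hμ : 0 < μ) (hδ : 0 ≤ δ) :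
    ∫ x in Set.Ioc (0:ℝ) δ, μ * Real.exp (-(μ * x)) = 1 - Real.exp (-(μ * δ)) := by
  rw [← intervalIntegral.integral_of_le hδ]
  have key : ∀ x ∈ Set.uIcc (0:ℝ) δ,
      HasDerivAt (fun t => -Real.exp (-(μ * t))) (μ * Real.exp (-(μ * x))) x := by
    intro x _
    have h1 : HasDerivAt (fun t : ℝ => -(μ * t)) (-μ) x := by
      simpa using ((hasDerivAt_id x).const_mul μ).fun_neg
    have h2 : HasDerivAt (fun t => -Real.exp (-(μ * t))) (-(Real.exp (-(μ * x)) * -μ)) x :=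
      (h1.exp).fun_neg
    convert h2 using 1
    ring
  rw [intervalIntegral.integral_eq_sub_of_hasDerivAt key]
  · simp [Real.exp_zero]; ring
  · apply Continuous.intervalIntegrable
    continuity

lemma one_sub_exp_ge {u : ℝ} (h0 : 0 ≤ u) (h1 : u ≤ 1) :
    u * Real.exp (-1) ≤ 1 - Real.exp (-u) := by
  have h2 : u + 1 ≤ Real.exp u := Real.add_one_le_exp u
  have h3 : Real.exp (-u) ≤ Real.exp (-0) := Real.exp_le_exp.2 (by linarith)
  have h4 : Real.exp (-u) ≤ 1 := by simpa using h3
  have h5 : Real.exp (-u) * Real.exp u = 1 := by rw [← Real.exp_add]; simp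
  have h6 : Real.exp (-1) ≤ Real.exp (-u) := Real.exp_le_exp.2 (by linarith)
  nlinarith [Real.exp_pos (-u), Real.exp_pos u]
lemma measurable_q (c : ℝ) : Measurable (fun x : ℝ => gaussQ (Real.sqrt (c * x))) :=
  measurable_gaussQ.comp (Real.continuous_sqrt.measurable.comp (measurable_id.const_mul c))

lemma integrable_one_sub_q_dens {c μ : ℝ} (hμ : 0 < μ) :
    IntegrableOn (fun x : ℝ => (1 - gaussQ (Real.sqrt (c * x))) * (μ * Real.exp (-(μ * x))))
      (Set.Ioi 0) := by
  apply Integrable.bdd_mul (c := 1) (integrable_dens hμ)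
    ((measurable_const.sub (measurable_q c)).aestronglyMeasurable)
  refine Filter.Eventually.of_forall (fun x => ?_)
  simp only [Pi.sub_apply]
  rw [Real.norm_eq_abs, abs_le]
  constructor
  · have := gaussQ_le_one (Real.sqrt (c * x)); linarith
  · have := gaussQ_nonneg (Real.sqrt (c * x)); linarith

lemma integrable_q_dens {c μ : ℝ} (hμ : 0 < μ) :
    IntegrableOn (fun x : ℝ => gaussQ (Real.sqrt (c * x)) * (μ * Real.exp (-(μ * x))))
      (Set.Ioi 0) := by
  apply Integrable.bdd_mul (c := 1) (integrable_dens hμ) ((measurable_q c).aestronglyMeasurable)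
  refine Filter.Eventually.of_forall (fun x => ?_)
  rw [Real.norm_eq_abs, abs_le]
  constructor
  · have := gaussQ_nonneg (Real.sqrt (c * x)); linarith
  · exact gaussQ_le_one _

lemma nc_factor_nonneg {c μ : ℝ} (hμ : 0 < μ) :
    0 ≤ ∫ x in Set.Ioi (0:ℝ), (1 - gaussQ (Real.sqrt (c * x))) * (μ * Real.exp (-(μ * x))) := by
  apply setIntegral_nonneg measurableSet_Ioi
  intro x _
  have h1 := gaussQ_le_one (Real.sqrt (c * x))
  have h2 : (0:ℝ) ≤ μ * Real.exp (-(μ * x)) := by positivity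
  nlinarith

lemma nc_factor_le_one {c μ : ℝ} (hμ : 0 < μ) :
    (∫ x in Set.Ioi (0:ℝ), (1 - gaussQ (Real.sqrt (c * x))) * (μ * Real.exp (-(μ * x)))) ≤ 1 := by
  conv_rhs => rw [← int_dens hμ]
  apply setIntegral_mono_on (integrable_one_sub_q_dens hμ) (integrable_dens hμ) measurableSet_Ioi
  intro x _
  have h1 := gaussQ_nonneg (Real.sqrt (c * x))
  have h2 : (0:ℝ) ≤ μ * Real.exp (-(μ * x)) := by positivity
  nlinarith

lemma nc_factor_le {μ dd ρ : ℝ} (hμ : 0 < μ) (hdd : 0 < dd) (hρ : 0 < ρ)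
    (hcond : μ * (2 * dd * ρ)⁻¹ ≤ 1) :
    (∫ x in Set.Ioi (0:ℝ),
        (1 - gaussQ (Real.sqrt (2 * dd * ρ * x))) * (μ * Real.exp (-(μ * x))))
      ≤ 1 - gaussQ 1 * (μ * (2 * dd * ρ)⁻¹ * Real.exp (-1)) := by
  set δ : ℝ := (2 * dd * ρ)⁻¹ with hδdef
  have hδpos : 0 < δ := by positivity
  -- split the integral
  have hsplit : (∫ x in Set.Ioi (0:ℝ),
      (1 - gaussQ (Real.sqrt (2 * dd * ρ * x))) * (μ * Real.exp (-(μ * x))))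
      = 1 - ∫ x in Set.Ioi (0:ℝ),
          gaussQ (Real.sqrt (2 * dd * ρ * x)) * (μ * Real.exp (-(μ * x))) := by
    have h : ∀ x : ℝ, (1 - gaussQ (Real.sqrt (2 * dd * ρ * x))) * (μ * Real.exp (-(μ * x)))
        = (μ * Real.exp (-(μ * x)))
          - gaussQ (Real.sqrt (2 * dd * ρ * x)) * (μ * Real.exp (-(μ * x))) := by
      intro x; ring
    rw [setIntegral_congr_fun measurableSet_Ioi (fun x _ => h x),
      integral_sub (integrable_dens hμ) (integrable_q_dens hμ), int_dens hμ]
  rw [hsplit]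
  have hJ : gaussQ 1 * (μ * δ * Real.exp (-1))
      ≤ ∫ x in Set.Ioi (0:ℝ), gaussQ (Real.sqrt (2 * dd * ρ * x)) * (μ * Real.exp (-(μ * x))) := by
    have step1 : ∫ x in Set.Ioc (0:ℝ) δ,
        gaussQ (Real.sqrt (2 * dd * ρ * x)) * (μ * Real.exp (-(μ * x)))
        ≤ ∫ x in Set.Ioi (0:ℝ),
            gaussQ (Real.sqrt (2 * dd * ρ * x)) * (μ * Real.exp (-(μ * x))) := by
      apply setIntegral_mono_set (integrable_q_dens hμ)
      · filter_upwards with x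
        simp only [Pi.zero_apply]
        have h1 := gaussQ_nonneg (Real.sqrt (2 * dd * ρ * x))
        have h2 : (0:ℝ) ≤ μ * Real.exp (-(μ * x)) := by positivity
        exact mul_nonneg h1 h2
      · exact HasSubset.Subset.eventuallyLE Set.Ioc_subset_Ioi_self
    have step2 : ∫ x in Set.Ioc (0:ℝ) δ, gaussQ 1 * (μ * Real.exp (-(μ * x)))
        ≤ ∫ x in Set.Ioc (0:ℝ) δ,
            gaussQ (Real.sqrt (2 * dd * ρ * x)) * (μ * Real.exp (-(μ * x))) := by
      apply setIntegral_mono_on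
        (((integrable_dens hμ).mono_set Set.Ioc_subset_Ioi_self).const_mul _)
        ((integrable_q_dens hμ).mono_set Set.Ioc_subset_Ioi_self) measurableSet_Ioc
      intro x hx
      have harg : 2 * dd * ρ * x ≤ 1 := by
        have : 2 * dd * ρ * x ≤ 2 * dd * ρ * δ :=
          mul_le_mul_of_nonneg_left hx.2 (by positivity)
        rw [hδdef, mul_inv_cancel₀ (by positivity)] at this
        exact this
      have hsq : Real.sqrt (2 * dd * ρ * x) ≤ 1 := Real.sqrt_le_one.mpr harg
      have hq : gaussQ 1 ≤ gaussQ (Real.sqrt (2 * dd * ρ * x)) := gaussQ_anti hsq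
      have h2 : (0:ℝ) < μ * Real.exp (-(μ * x)) := by positivity
      nlinarith
    have step3 : ∫ x in Set.Ioc (0:ℝ) δ, gaussQ 1 * (μ * Real.exp (-(μ * x)))
        = gaussQ 1 * (1 - Real.exp (-(μ * δ))) := by
      rw [MeasureTheory.integral_const_mul, int_dens_Ioc hμ hδpos.le]
    have step4 : μ * δ * Real.exp (-1) ≤ 1 - Real.exp (-(μ * δ)) :=
      one_sub_exp_ge (by positivity) hcond
    have := mul_le_mul_of_nonneg_left step4 (gaussQ_nonneg 1)
    linarith
  linarith

lemma q_sqrt_le {u : ℝ} (hu : 0 ≤ u) : gaussQ (Real.sqrt u) ≤ Real.exp (-(u / 2)) := by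
  have h := gaussQ_le_exp (Real.sqrt_nonneg u)
  rwa [Real.sq_sqrt hu, show -u / 2 = -(u / 2) by ring] at h

lemma bracket_ge {a c b b' A C B B' : ℝ}
    (ha0 : 0 ≤ a) (haA : a ≤ A) (hA1 : A ≤ 1)
    (hc0 : 0 ≤ c) (hcC : c ≤ C) (hC1 : C ≤ 1)
    (hb0 : 0 ≤ b) (hbB : b ≤ B)
    (hb'0 : 0 ≤ b') (hb'B : b' ≤ B') :
    1 - (A * C + C * B + A * B') ≤
      (1 - a) * (1 - c) + (1 - a) * c * (1 - b) + a * (1 - c) * (1 - b') := by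
  have hA0 : 0 ≤ A := le_trans ha0 haA
  have hC0 : 0 ≤ C := le_trans hc0 hcC
  have key : (1 - a) * (1 - c) + (1 - a) * c * (1 - b) + a * (1 - c) * (1 - b')
      = 1 - a * c - ((1 - a) * c) * b - (a * (1 - c)) * b' := by ring
  rw [key]
  have h1 : a * c ≤ A * C := mul_le_mul haA hcC hc0 hA0
  have h2 : ((1 - a) * c) * b ≤ C * B := by
    have hcb : ((1 - a) * c) * b ≤ c * b := by
      nlinarith [mul_nonneg (mul_nonneg ha0 hc0) hb0]
    have : c * b ≤ C * B := mul_le_mul hcC hbB hb0 hC0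
    linarith
  have h3 : (a * (1 - c)) * b' ≤ A * B' := by
    have : (a * (1 - c)) * b' ≤ a * b' := by
      nlinarith [mul_nonneg (mul_nonneg ha0 hc0) hb'0]
    have h4 : a * b' ≤ A * B' := mul_le_mul haA hb'B hb'0 hA0
    linarith
  linarith

lemma measurable_gaussQ_sqrt {α : Type*} [MeasurableSpace α] {w : α → ℝ} (hw : Measurable w) :
    Measurable fun p => gaussQ (Real.sqrt (w p)) :=
  measurable_gaussQ.comp (Real.continuous_sqrt.measurable.comp hw)

lemma F_bounds {a c b b' : ℝ} (ha : 0 ≤ a) (ha1 : a ≤ 1) (hc : 0 ≤ c) (hc1 : c ≤ 1)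
    (hb : 0 ≤ b) (hb1 : b ≤ 1) (hb' : 0 ≤ b') (hb'1 : b' ≤ 1) :
    0 ≤ (1 - a) * (1 - c) + (1 - a) * c * (1 - b) + a * (1 - c) * (1 - b')
    ∧ (1 - a) * (1 - c) + (1 - a) * c * (1 - b) + a * (1 - c) * (1 - b') ≤ 3 := by
  have t1 : 0 ≤ (1 - a) * (1 - c) := mul_nonneg (by linarith) (by linarith)
  have t2 : 0 ≤ (1 - a) * c * (1 - b) := mul_nonneg (mul_nonneg (by linarith) hc) (by linarith)
  have t3 : 0 ≤ a * (1 - c) * (1 - b') := mul_nonneg (mul_nonneg ha (by linarith)) (by linarith)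
  have u1 : (1 - a) * (1 - c) ≤ 1 := mul_le_one₀ (by linarith) (by linarith) (by linarith)
  have u2 : (1 - a) * c * (1 - b) ≤ 1 :=
    mul_le_one₀ (mul_le_one₀ (by linarith) hc hc1) (by linarith) (by linarith)
  have u3 : a * (1 - c) * (1 - b') ≤ 1 :=
    mul_le_one₀ (mul_le_one₀ ha1 (by linarith) (by linarith)) (by linarith) (by linarith)
  exact ⟨by linarith, by linarith⟩

lemma lhs_ge (μ₁ μ₂ μ₃ d₁ d₂ ρ : ℝ)
    (hμ₁ : 0 < μ₁) (hμ₂ : 0 < μ₂) (hμ₃ : 0 < μ₃) (hd₁ : 0 < d₁) (hd₂ : 0 < d₂) (hρ : 0 < ρ) :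
    1 - ((μ₂ / (μ₂ + d₂ * ρ) + μ₃ / (μ₃ + d₁ * ρ)) * (μ₁ / (μ₁ + d₁ * ρ))
        + μ₃ / (μ₃ + 2 * (d₁ * ρ)) * (μ₂ / (μ₂ + d₂ * ρ)))
    ≤ ∫ x in Set.Ioi (0 : ℝ), ∫ y in Set.Ioi (0 : ℝ), ∫ z in Set.Ioi (0 : ℝ),
          ((1 - gaussQ (Real.sqrt (2 * d₁ * ρ * x))) *
              (1 - gaussQ (Real.sqrt (2 * d₁ * ρ * z))) +
            (1 - gaussQ (Real.sqrt (2 * d₁ * ρ * x))) *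
              gaussQ (Real.sqrt (2 * d₁ * ρ * z)) *
              (1 - gaussQ (Real.sqrt (2 * d₁ * ρ * z + 2 * d₂ * ρ * y))) +
            gaussQ (Real.sqrt (2 * d₁ * ρ * x)) *
              (1 - gaussQ (Real.sqrt (2 * d₁ * ρ * z))) *
              (1 - gaussQ (Real.sqrt (2 * d₁ * ρ * x + 2 * d₂ * ρ * y)))) *
            ((μ₁ * Real.exp (-(μ₁ * x))) * (μ₂ * Real.exp (-(μ₂ * y))) *
              (μ₃ * Real.exp (-(μ₃ * z)))) := by
  have hk : (0:ℝ) < d₁ * ρ := by positivity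
  have hkb : (0:ℝ) < d₂ * ρ := by positivity
  -- the bracket as a function
  set F : ℝ → ℝ → ℝ → ℝ := fun x y z =>
    (1 - gaussQ (Real.sqrt (2 * d₁ * ρ * x))) * (1 - gaussQ (Real.sqrt (2 * d₁ * ρ * z))) +
      (1 - gaussQ (Real.sqrt (2 * d₁ * ρ * x))) * gaussQ (Real.sqrt (2 * d₁ * ρ * z)) *
        (1 - gaussQ (Real.sqrt (2 * d₁ * ρ * z + 2 * d₂ * ρ * y))) +
      gaussQ (Real.sqrt (2 * d₁ * ρ * x)) * (1 - gaussQ (Real.sqrt (2 * d₁ * ρ * z))) *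
        (1 - gaussQ (Real.sqrt (2 * d₁ * ρ * x + 2 * d₂ * ρ * y))) with hFdef
  have hF01 : ∀ x y z : ℝ, 0 ≤ F x y z ∧ F x y z ≤ 3 := by
    intro x y z
    exact F_bounds (gaussQ_nonneg _) (gaussQ_le_one _) (gaussQ_nonneg _) (gaussQ_le_one _)
      (gaussQ_nonneg _) (gaussQ_le_one _) (gaussQ_nonneg _) (gaussQ_le_one _)
  -- measurability of F (uncurried)
  have hFm : Measurable (fun p : (ℝ × ℝ) × ℝ => F p.1.1 p.1.2 p.2) := by
    rw [hFdef]
    have mqx : Measurable fun p : (ℝ × ℝ) × ℝ => gaussQ (Real.sqrt (2 * d₁ * ρ * p.1.1)) :=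
      measurable_gaussQ_sqrt (measurable_fst.fst.const_mul (2 * d₁ * ρ))
    have mqz : Measurable fun p : (ℝ × ℝ) × ℝ => gaussQ (Real.sqrt (2 * d₁ * ρ * p.2)) :=
      measurable_gaussQ_sqrt (measurable_snd.const_mul (2 * d₁ * ρ))
    have mqzy : Measurable fun p : (ℝ × ℝ) × ℝ =>
        gaussQ (Real.sqrt (2 * d₁ * ρ * p.2 + 2 * d₂ * ρ * p.1.2)) :=
      measurable_gaussQ_sqrt ((measurable_snd.const_mul (2 * d₁ * ρ)).add
        (measurable_fst.snd.const_mul (2 * d₂ * ρ)))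
    have mqxy : Measurable fun p : (ℝ × ℝ) × ℝ =>
        gaussQ (Real.sqrt (2 * d₁ * ρ * p.1.1 + 2 * d₂ * ρ * p.1.2)) :=
      measurable_gaussQ_sqrt ((measurable_fst.fst.const_mul (2 * d₁ * ρ)).add
        (measurable_fst.snd.const_mul (2 * d₂ * ρ)))
    exact (((measurable_const.sub mqx).mul (measurable_const.sub mqz)).add
      (((measurable_const.sub mqx).mul mqz).mul (measurable_const.sub mqzy))).add
      ((mqx.mul (measurable_const.sub mqz)).mul (measurable_const.sub mqxy))
  -- inner integral J2
  set J2 : ℝ → ℝ → ℝ := fun x y =>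
    ∫ z in Set.Ioi (0:ℝ), F x y z * (μ₃ * Real.exp (-(μ₃ * z))) with hJ2def
  have hJ2zint : ∀ x y : ℝ,
      IntegrableOn (fun z => F x y z * (μ₃ * Real.exp (-(μ₃ * z)))) (Set.Ioi 0) := by
    intro x y
    apply Integrable.bdd_mul (c := 3) (integrable_dens hμ₃)
      ((hFm.comp (measurable_prodMk_left (x := (x, y)))).aestronglyMeasurable)
    exact Filter.Eventually.of_forall (fun z => by
      simp only [Function.comp_apply]
      rw [Real.norm_eq_abs, abs_le]
      exact ⟨by linarith [(hF01 x y z).1], (hF01 x y z).2⟩)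
  have hJ2nonneg : ∀ x y : ℝ, 0 ≤ J2 x y := by
    intro x y
    apply setIntegral_nonneg measurableSet_Ioi
    intro z _
    exact mul_nonneg (hF01 x y z).1 (by positivity)
  have hJ2le : ∀ x y : ℝ, J2 x y ≤ 3 := by
    intro x y
    have h1 : J2 x y ≤ ∫ z in Set.Ioi (0:ℝ), 3 * (μ₃ * Real.exp (-(μ₃ * z))) := by
      apply setIntegral_mono_on (hJ2zint x y)
        (((integrable_dens hμ₃)).const_mul 3) measurableSet_Ioi
      intro z _
      exact mul_le_mul_of_nonneg_right (hF01 x y z).2 (by positivity)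
    rw [MeasureTheory.integral_const_mul, int_dens hμ₃] at h1
    linarith
  -- strong measurability of J2 (uncurried)
  have hSM2 : StronglyMeasurable (fun xy : ℝ × ℝ => J2 xy.1 xy.2) := by
    rw [hJ2def]
    exact (hFm.mul (((measurable_snd.const_mul μ₃).neg.exp.const_mul μ₃))).stronglyMeasurable.integral_prod_right'
  -- integral J1
  set J1 : ℝ → ℝ := fun x =>
    ∫ y in Set.Ioi (0:ℝ), J2 x y * (μ₂ * Real.exp (-(μ₂ * y))) with hJ1def
  have hJ1yint : ∀ x : ℝ,
      IntegrableOn (fun y => J2 x y * (μ₂ * Real.exp (-(μ₂ * y)))) (Set.Ioi 0) := by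
    intro x
    apply Integrable.bdd_mul (c := 3) (integrable_dens hμ₂)
      ((hSM2.comp_measurable (measurable_prodMk_left (x := x))).aestronglyMeasurable)
    exact Filter.Eventually.of_forall (fun y => by
      simp only [Function.comp_apply]
      rw [Real.norm_eq_abs, abs_le]
      exact ⟨by linarith [hJ2nonneg x y], hJ2le x y⟩)
  have hJ1nonneg : ∀ x : ℝ, 0 ≤ J1 x := by
    intro x
    apply setIntegral_nonneg measurableSet_Ioi
    intro y _
    exact mul_nonneg (hJ2nonneg x y) (by positivity)
  have hJ1le : ∀ x : ℝ, J1 x ≤ 3 := by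
    intro x
    have h1 : J1 x ≤ ∫ y in Set.Ioi (0:ℝ), 3 * (μ₂ * Real.exp (-(μ₂ * y))) := by
      apply setIntegral_mono_on (hJ1yint x)
        (((integrable_dens hμ₂)).const_mul 3) measurableSet_Ioi
      intro y _
      exact mul_le_mul_of_nonneg_right (hJ2le x y) (by positivity)
    rw [MeasureTheory.integral_const_mul, int_dens hμ₂] at h1
    linarith
  have hSM1 : StronglyMeasurable J1 := by
    rw [hJ1def]
    exact (hSM2.mul (((measurable_snd.const_mul μ₂).neg.exp.const_mul
      μ₂)).stronglyMeasurable).integral_prod_right'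
  have hJ1int : IntegrableOn (fun x => J1 x * (μ₁ * Real.exp (-(μ₁ * x)))) (Set.Ioi 0) := by
    apply Integrable.bdd_mul (c := 3) (integrable_dens hμ₁) hSM1.aestronglyMeasurable
    exact Filter.Eventually.of_forall (fun x => by
      rw [Real.norm_eq_abs, abs_le]
      exact ⟨by linarith [hJ1nonneg x], hJ1le x⟩)
  -- rewrite the triple integral
  have step_z : ∀ x y : ℝ,
      (∫ z in Set.Ioi (0:ℝ), F x y z *
          ((μ₁ * Real.exp (-(μ₁ * x))) * (μ₂ * Real.exp (-(μ₂ * y))) *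
            (μ₃ * Real.exp (-(μ₃ * z)))))
      = (μ₁ * Real.exp (-(μ₁ * x)) * (μ₂ * Real.exp (-(μ₂ * y)))) * J2 x y := by
    intro x y
    rw [hJ2def]
    rw [← MeasureTheory.integral_const_mul]
    apply setIntegral_congr_fun measurableSet_Ioi
    intro z _
    ring
  have step_y : ∀ x : ℝ,
      (∫ y in Set.Ioi (0:ℝ), ∫ z in Set.Ioi (0:ℝ), F x y z *
          ((μ₁ * Real.exp (-(μ₁ * x))) * (μ₂ * Real.exp (-(μ₂ * y))) *
            (μ₃ * Real.exp (-(μ₃ * z)))))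
      = (μ₁ * Real.exp (-(μ₁ * x))) * J1 x := by
    intro x
    rw [hJ1def, ← MeasureTheory.integral_const_mul]
    apply setIntegral_congr_fun measurableSet_Ioi
    intro y _
    beta_reduce
    rw [step_z x y]
    ring
  have whole : (∫ x in Set.Ioi (0:ℝ), ∫ y in Set.Ioi (0:ℝ), ∫ z in Set.Ioi (0:ℝ), F x y z *
          ((μ₁ * Real.exp (-(μ₁ * x))) * (μ₂ * Real.exp (-(μ₂ * y))) *
            (μ₃ * Real.exp (-(μ₃ * z)))))
      = ∫ x in Set.Ioi (0:ℝ), J1 x * (μ₁ * Real.exp (-(μ₁ * x))) :=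
    setIntegral_congr_fun measurableSet_Ioi (fun x _ => (step_y x).trans (mul_comm _ _))
  -- z-layer bound
  have hz : ∀ x ∈ Set.Ioi (0:ℝ), ∀ y ∈ Set.Ioi (0:ℝ),
      1 - Real.exp (-(d₁ * ρ * x)) * (μ₃ / (μ₃ + d₁ * ρ))
        - Real.exp (-(d₂ * ρ * y)) * (μ₃ / (μ₃ + 2 * (d₁ * ρ)))
        - Real.exp (-(d₁ * ρ * x)) * Real.exp (-(d₁ * ρ * x + d₂ * ρ * y)) ≤ J2 x y := by
    intro x hx y hy
    rw [Set.mem_Ioi] at hx hy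
    rw [← int_lin (k₁ := d₁ * ρ) (k₂ := 2 * (d₁ * ρ)) hk.le (by positivity) hμ₃, hJ2def]
    apply setIntegral_mono_on (integrable_lin hk.le (by positivity) hμ₃) (hJ2zint x y)
      measurableSet_Ioi
    intro z hz'
    rw [Set.mem_Ioi] at hz'
    apply mul_le_mul_of_nonneg_right _ (by positivity)
    have hax : gaussQ (Real.sqrt (2 * d₁ * ρ * x)) ≤ Real.exp (-(d₁ * ρ * x)) := by
      have h := q_sqrt_le (u := 2 * d₁ * ρ * x) (by positivity)
      rwa [show 2 * d₁ * ρ * x / 2 = d₁ * ρ * x by ring] at h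
    have haz : gaussQ (Real.sqrt (2 * d₁ * ρ * z)) ≤ Real.exp (-(d₁ * ρ * z)) := by
      have h := q_sqrt_le (u := 2 * d₁ * ρ * z) (by positivity)
      rwa [show 2 * d₁ * ρ * z / 2 = d₁ * ρ * z by ring] at h
    have hbzy : gaussQ (Real.sqrt (2 * d₁ * ρ * z + 2 * d₂ * ρ * y))
        ≤ Real.exp (-(d₁ * ρ * z + d₂ * ρ * y)) := by
      have h := q_sqrt_le (u := 2 * d₁ * ρ * z + 2 * d₂ * ρ * y) (by positivity)
      rwa [show (2 * d₁ * ρ * z + 2 * d₂ * ρ * y) / 2 = d₁ * ρ * z + d₂ * ρ * y by ring] at h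
    have hbxy : gaussQ (Real.sqrt (2 * d₁ * ρ * x + 2 * d₂ * ρ * y))
        ≤ Real.exp (-(d₁ * ρ * x + d₂ * ρ * y)) := by
      have h := q_sqrt_le (u := 2 * d₁ * ρ * x + 2 * d₂ * ρ * y) (by positivity)
      rwa [show (2 * d₁ * ρ * x + 2 * d₂ * ρ * y) / 2 = d₁ * ρ * x + d₂ * ρ * y by ring] at h
    have key := bracket_ge (gaussQ_nonneg _) hax
      (Real.exp_le_one_iff.2 (by nlinarith)) (gaussQ_nonneg _) haz
      (Real.exp_le_one_iff.2 (by nlinarith)) (gaussQ_nonneg _) hbzy (gaussQ_nonneg _) hbxy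
    have hCB : Real.exp (-(d₁ * ρ * z)) * Real.exp (-(d₁ * ρ * z + d₂ * ρ * y))
        = Real.exp (-(d₂ * ρ * y)) * Real.exp (-(2 * (d₁ * ρ) * z)) := by
      rw [← Real.exp_add, ← Real.exp_add]
      ring_nf
    rw [hFdef]
    simp only
    calc 1 - (Real.exp (-(d₁ * ρ * x)) * Real.exp (-(d₁ * ρ * z))
            + Real.exp (-(d₂ * ρ * y)) * Real.exp (-(2 * (d₁ * ρ) * z))
            + Real.exp (-(d₁ * ρ * x)) * Real.exp (-(d₁ * ρ * x + d₂ * ρ * y)))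
        = 1 - (Real.exp (-(d₁ * ρ * x)) * Real.exp (-(d₁ * ρ * z))
            + Real.exp (-(d₁ * ρ * z)) * Real.exp (-(d₁ * ρ * z + d₂ * ρ * y))
            + Real.exp (-(d₁ * ρ * x)) * Real.exp (-(d₁ * ρ * x + d₂ * ρ * y))) := by
          rw [hCB]
      _ ≤ _ := key
  -- y-layer bound
  have hy : ∀ x ∈ Set.Ioi (0:ℝ),
      1 - (μ₃ / (μ₃ + 2 * (d₁ * ρ))) * (μ₂ / (μ₂ + d₂ * ρ))
        - Real.exp (-(d₁ * ρ * x)) * (μ₂ / (μ₂ + d₂ * ρ))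
        - Real.exp (-(d₁ * ρ * x)) * (μ₃ / (μ₃ + d₁ * ρ)) ≤ J1 x := by
    intro x hx
    have hstep := int_lin (c₁ := μ₃ / (μ₃ + 2 * (d₁ * ρ))) (c₂ := Real.exp (-(d₁ * ρ * x)))
      (c₃ := Real.exp (-(d₁ * ρ * x)) * (μ₃ / (μ₃ + d₁ * ρ)))
      (k₁ := d₂ * ρ) (k₂ := d₂ * ρ) hkb.le hkb.le hμ₂
    rw [hJ1def]
    have hmono : (∫ y in Set.Ioi (0:ℝ),
        (1 - (μ₃ / (μ₃ + 2 * (d₁ * ρ)) * Real.exp (-(d₂ * ρ * y))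
          + Real.exp (-(d₁ * ρ * x)) * Real.exp (-(d₂ * ρ * y))
          + Real.exp (-(d₁ * ρ * x)) * (μ₃ / (μ₃ + d₁ * ρ)))) * (μ₂ * Real.exp (-(μ₂ * y))))
        ≤ ∫ y in Set.Ioi (0:ℝ), J2 x y * (μ₂ * Real.exp (-(μ₂ * y))) := by
      apply setIntegral_mono_on (integrable_lin hkb.le hkb.le hμ₂) (hJ1yint x)
        measurableSet_Ioi
      intro y hy'
      apply mul_le_mul_of_nonneg_right _ (by positivity)
      have h1 := hz x hx y hy'
      rw [Set.mem_Ioi] at hx hy'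
      have h2 : Real.exp (-(d₁ * ρ * x + d₂ * ρ * y)) ≤ Real.exp (-(d₂ * ρ * y)) :=
        Real.exp_le_exp.2 (by nlinarith)
      have h3 : Real.exp (-(d₁ * ρ * x)) * Real.exp (-(d₁ * ρ * x + d₂ * ρ * y))
          ≤ Real.exp (-(d₁ * ρ * x)) * Real.exp (-(d₂ * ρ * y)) :=
        mul_le_mul_of_nonneg_left h2 (Real.exp_pos _).le
      nlinarith [h1, h3]
    rw [hstep] at hmono
    linarith [hmono]
  -- x-layer bound
  have hx : (∫ x in Set.Ioi (0:ℝ),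
      (1 - ((μ₂ / (μ₂ + d₂ * ρ) + μ₃ / (μ₃ + d₁ * ρ)) * Real.exp (-(d₁ * ρ * x))
        + 0 * Real.exp (-(0 * x))
        + μ₃ / (μ₃ + 2 * (d₁ * ρ)) * (μ₂ / (μ₂ + d₂ * ρ)))) * (μ₁ * Real.exp (-(μ₁ * x))))
      ≤ ∫ x in Set.Ioi (0:ℝ), J1 x * (μ₁ * Real.exp (-(μ₁ * x))) := by
    apply setIntegral_mono_on (integrable_lin hk.le (le_refl 0) hμ₁) hJ1int measurableSet_Ioi
    intro x hx'
    apply mul_le_mul_of_nonneg_right _ (by positivity)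
    have h1 := hy x hx'
    calc 1 - ((μ₂ / (μ₂ + d₂ * ρ) + μ₃ / (μ₃ + d₁ * ρ)) * Real.exp (-(d₁ * ρ * x))
          + 0 * Real.exp (-(0 * x))
          + μ₃ / (μ₃ + 2 * (d₁ * ρ)) * (μ₂ / (μ₂ + d₂ * ρ)))
        = 1 - (μ₃ / (μ₃ + 2 * (d₁ * ρ))) * (μ₂ / (μ₂ + d₂ * ρ))
          - Real.exp (-(d₁ * ρ * x)) * (μ₂ / (μ₂ + d₂ * ρ))
          - Real.exp (-(d₁ * ρ * x)) * (μ₃ / (μ₃ + d₁ * ρ)) := by ring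
      _ ≤ J1 x := h1
  rw [whole]
  have hval := int_lin (c₁ := μ₂ / (μ₂ + d₂ * ρ) + μ₃ / (μ₃ + d₁ * ρ)) (c₂ := (0:ℝ))
    (c₃ := μ₃ / (μ₃ + 2 * (d₁ * ρ)) * (μ₂ / (μ₂ + d₂ * ρ)))
    (k₁ := d₁ * ρ) (k₂ := (0:ℝ)) hk.le (le_refl 0) hμ₁
  rw [hval] at hx
  calc 1 - ((μ₂ / (μ₂ + d₂ * ρ) + μ₃ / (μ₃ + d₁ * ρ)) * (μ₁ / (μ₁ + d₁ * ρ))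
        + μ₃ / (μ₃ + 2 * (d₁ * ρ)) * (μ₂ / (μ₂ + d₂ * ρ)))
      = 1 - (μ₂ / (μ₂ + d₂ * ρ) + μ₃ / (μ₃ + d₁ * ρ)) * (μ₁ / (μ₁ + d₁ * ρ))
        - 0 * (μ₁ / (μ₁ + 0)) - μ₃ / (μ₃ + 2 * (d₁ * ρ)) * (μ₂ / (μ₂ + d₂ * ρ)) := by ring
    _ ≤ _ := hx

end helpers

set_option maxHeartbeats 1000000 in
open Set in
/-- Let `X, Y, Z` be independent exponentially distributed with rates
`μ₁, μ₂, μ₃ > 0`, `d₁, d₂ > 0`, `d = d₁ + d₂`, and write `q₁(u) = Q(√(2d₁ρu))`.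
With the CSA joint-success probability
`P^C(ρ) = E[(1−q₁(X))(1−q₁(Z)) + (1−q₁(X))q₁(Z)(1−Q(√(2d₁ρZ+2d₂ρY)))
          + q₁(X)(1−q₁(Z))(1−Q(√(2d₁ρX+2d₂ρY)))]`
and the non-cooperative joint-success probability
`P^{NC}(ρ) = E[1−Q(√(2dρX))] · E[1−Q(√(2dρZ))]` (expectations written as
integrals against the exponential densities), there exists `ρ₀ > 0` such that
for all `ρ ≥ ρ₀`, `P^C(ρ) ≥ P^{NC}(ρ)`. -/
theorem csa_joint_success_ge_noncooperative (μ₁ μ₂ μ₃ d₁ d₂ d : ℝ)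
    (hμ₁ : 0 < μ₁) (hμ₂ : 0 < μ₂) (hμ₃ : 0 < μ₃) (hd₁ : 0 < d₁) (hd₂ : 0 < d₂)
    (hd : d = d₁ + d₂) :
    ∃ ρ₀ : ℝ, 0 < ρ₀ ∧ ∀ ρ ≥ ρ₀,
      (∫ x in Set.Ioi (0 : ℝ), ∫ y in Set.Ioi (0 : ℝ), ∫ z in Set.Ioi (0 : ℝ),
          ((1 - gaussQ (Real.sqrt (2 * d₁ * ρ * x))) *
              (1 - gaussQ (Real.sqrt (2 * d₁ * ρ * z))) +
            (1 - gaussQ (Real.sqrt (2 * d₁ * ρ * x))) *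
              gaussQ (Real.sqrt (2 * d₁ * ρ * z)) *
              (1 - gaussQ (Real.sqrt (2 * d₁ * ρ * z + 2 * d₂ * ρ * y))) +
            gaussQ (Real.sqrt (2 * d₁ * ρ * x)) *
              (1 - gaussQ (Real.sqrt (2 * d₁ * ρ * z))) *
              (1 - gaussQ (Real.sqrt (2 * d₁ * ρ * x + 2 * d₂ * ρ * y)))) *
            ((μ₁ * Real.exp (-μ₁ * x)) * (μ₂ * Real.exp (-μ₂ * y)) *
              (μ₃ * Real.exp (-μ₃ * z)))) ≥
        (∫ x in Set.Ioi (0 : ℝ),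
            (1 - gaussQ (Real.sqrt (2 * d * ρ * x))) * (μ₁ * Real.exp (-μ₁ * x))) *
          (∫ z in Set.Ioi (0 : ℝ),
            (1 - gaussQ (Real.sqrt (2 * d * ρ * z))) * (μ₃ * Real.exp (-μ₃ * z))) := by
  have hdpos : 0 < d := by rw [hd]; linarith
  have hc₀ : 0 < gaussQ 1 := gaussQ_one_pos
  set W : ℝ := gaussQ 1 * μ₁ * Real.exp (-1) / (2 * d) with hWdef
  have hW : 0 < W := by rw [hWdef]; positivity
  set M : ℝ := (μ₂ / d₂ + μ₃ / d₁) * (μ₁ / d₁) + μ₃ / (2 * d₁) * (μ₂ / d₂) with hMdef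
  refine ⟨max 1 (max (μ₁ / (2 * d)) (M / W)), lt_of_lt_of_le one_pos (le_max_left _ _), ?_⟩
  intro ρ hρ
  have hρ1 : (1:ℝ) ≤ ρ := le_trans (le_max_left _ _) hρ
  have hρ2 : μ₁ / (2 * d) ≤ ρ := le_trans (le_trans (le_max_left _ _) (le_max_right _ _)) hρ
  have hρ3 : M / W ≤ ρ := le_trans (le_trans (le_max_right _ _) (le_max_right _ _)) hρ
  have hρpos : 0 < ρ := lt_of_lt_of_le one_pos hρ1
  simp only [neg_mul]
  rw [ge_iff_le]
  -- lower bound for the triple integral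
  have hL := lhs_ge μ₁ μ₂ μ₃ d₁ d₂ ρ hμ₁ hμ₂ hμ₃ hd₁ hd₂ hρpos
  -- upper bound for the RHS
  have hcond : μ₁ * (2 * d * ρ)⁻¹ ≤ 1 := by
    rw [div_le_iff₀ (by positivity)] at hρ2
    rw [mul_inv_le_iff₀ (by positivity)]
    nlinarith
  have h1 := nc_factor_le hμ₁ hdpos hρpos hcond
  have h2 := nc_factor_le_one (c := 2 * d * ρ) hμ₃
  have h3 := nc_factor_nonneg (c := 2 * d * ρ) hμ₃
  have h4 := nc_factor_nonneg (c := 2 * d * ρ) hμ₁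
  have hprod : (∫ x in Set.Ioi (0 : ℝ),
        (1 - gaussQ (Real.sqrt (2 * d * ρ * x))) * (μ₁ * Real.exp (-(μ₁ * x)))) *
      (∫ z in Set.Ioi (0 : ℝ),
        (1 - gaussQ (Real.sqrt (2 * d * ρ * z))) * (μ₃ * Real.exp (-(μ₃ * z))))
      ≤ 1 - gaussQ 1 * (μ₁ * (2 * d * ρ)⁻¹ * Real.exp (-1)) :=
    le_trans (mul_le_of_le_one_right h4 h2) h1
  -- arithmetic comparison of the error terms
  have e1 : μ₂ / (μ₂ + d₂ * ρ) ≤ μ₂ / (d₂ * ρ) := by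
    apply div_le_div_of_nonneg_left hμ₂.le (by positivity)
    linarith
  have e2 : μ₃ / (μ₃ + d₁ * ρ) ≤ μ₃ / (d₁ * ρ) := by
    apply div_le_div_of_nonneg_left hμ₃.le (by positivity)
    linarith
  have e3 : μ₁ / (μ₁ + d₁ * ρ) ≤ μ₁ / (d₁ * ρ) := by
    apply div_le_div_of_nonneg_left hμ₁.le (by positivity)
    linarith
  have e4 : μ₃ / (μ₃ + 2 * (d₁ * ρ)) ≤ μ₃ / (2 * (d₁ * ρ)) := by
    apply div_le_div_of_nonneg_left hμ₃.le (by positivity)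
    linarith
  have t1 : (μ₂ / (μ₂ + d₂ * ρ) + μ₃ / (μ₃ + d₁ * ρ)) * (μ₁ / (μ₁ + d₁ * ρ))
      ≤ (μ₂ / (d₂ * ρ) + μ₃ / (d₁ * ρ)) * (μ₁ / (d₁ * ρ)) :=
    mul_le_mul (by linarith) e3 (by positivity) (by positivity)
  have t2 : μ₃ / (μ₃ + 2 * (d₁ * ρ)) * (μ₂ / (μ₂ + d₂ * ρ))
      ≤ μ₃ / (2 * (d₁ * ρ)) * (μ₂ / (d₂ * ρ)) :=
    mul_le_mul e4 e1 (by positivity) (by positivity)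
  have eqM : (μ₂ / (d₂ * ρ) + μ₃ / (d₁ * ρ)) * (μ₁ / (d₁ * ρ))
      + μ₃ / (2 * (d₁ * ρ)) * (μ₂ / (d₂ * ρ)) = M / ρ ^ 2 := by
    rw [hMdef]
    field_simp
  have hMW : M ≤ W * ρ := by
    rw [div_le_iff₀ hW] at hρ3
    linarith
  have hMρ : M / ρ ^ 2 ≤ W / ρ := by
    rw [div_le_div_iff₀ (by positivity) hρpos]
    nlinarith
  have hWρ : W / ρ = gaussQ 1 * (μ₁ * (2 * d * ρ)⁻¹ * Real.exp (-1)) := by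
    rw [hWdef]
    field_simp
  linarith [hL, hprod, t1, t2]
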